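/- arXiv:0705.4009 — 3 statements merged into one kernel-verified Lean document; each statement's English description precedes it below -/
import Mathlib

section
/- (Menelaos property in conical groups) Let G be a group with a multiplicative one-parameter family of automorphisms (δ_ε)_{ε>0}, with point-based dilatations δ^x_ε u = x δ_ε(x⁻¹ u). Then for x, y ∈ G and ε, μ ∈ (0,1), if w is a fixed point of δ^x_ε ∘ δ^y_μ, then δ^x_ε ∘ δ^y_μ = δ^w_{εμ}. -/
theorem stmt16 {G : Type*} [Group G] (δ : ℝ → G →* G)
    (hδmul : ∀ ε μ : ℝ, 0 < ε → 0 < μ → ∀ g, δ ε (δ μ g) = δ (ε * μ) g)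
    (x y w : G) (ε μ : ℝ) (hε : ε ∈ Set.Ioo (0 : ℝ) 1) (hμ : μ ∈ Set.Ioo (0 : ℝ) 1)
    (hfix : x * δ ε (x⁻¹ * (y * δ μ (y⁻¹ * w))) = w) :
    ∀ z : G, x * δ ε (x⁻¹ * (y * δ μ (y⁻¹ * z))) = w * δ (ε * μ) (w⁻¹ * z) := by
  intro z
  have key : ∀ u : G, x * δ ε (x⁻¹ * (y * δ μ (y⁻¹ * u))) =
      x * δ ε (x⁻¹ * y) * δ (ε * μ) y⁻¹ * δ (ε * μ) u := by
    intro u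
    simp only [map_mul, hδmul ε μ hε.1 hμ.1, mul_assoc]
  have hfix' : x * δ ε (x⁻¹ * y) * δ (ε * μ) y⁻¹ = w * (δ (ε * μ) w)⁻¹ := by
    have h := (key w).symm.trans hfix
    exact eq_mul_inv_of_mul_eq h
  rw [key z, hfix', map_mul, map_inv]
  group
end

section
/- Let (X,d) be a complete metric space with maps δ^x_ε : X → X for x ∈ X, ε ∈ (0,1], satisfying the linearity condition δ^x_ε ∘ δ^y_μ = δ^{δ^x_ε y}_μ ∘ δ^x_ε and the exact cone condition d(δ^x_ε u, δ^x_ε v) = ε·d(u,v) for all x,y,u,v ∈ X and ε,μ ∈ (0,1]. Define sequences x_0 = x, y_0 = y, y_{n+1} = δ^{x_n}_ε y_n, x_{n+1} = δ^{y_{n+1}}_μ x_n. Then d(x_{n+1}, y_{n+1}) = εμ·d(x_n, y_n), hence d(x_n, y_n) = (εμ)^n d(x,y) → 0 when εμ < 1. -/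
theorem stmt17 {X : Type*} [MetricSpace X] [CompleteSpace X]
    (δ : X → ℝ → X → X)
    (hfix : ∀ x : X, ∀ ε ∈ Set.Ioc (0 : ℝ) 1, δ x ε x = x)
    (hlin : ∀ (x y : X), ∀ ε ∈ Set.Ioc (0 : ℝ) 1, ∀ μ ∈ Set.Ioc (0 : ℝ) 1,
      ∀ z : X, δ x ε (δ y μ z) = δ (δ x ε y) μ (δ x ε z))
    (hcone : ∀ x : X, ∀ ε ∈ Set.Ioc (0 : ℝ) 1, ∀ u v : X,
      dist (δ x ε u) (δ x ε v) = ε * dist u v)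
    (ε μ : ℝ) (hε : ε ∈ Set.Ioc (0 : ℝ) 1) (hμ : μ ∈ Set.Ioc (0 : ℝ) 1)
    (hεμ : ε * μ < 1)
    (x y : X) (xs ys : ℕ → X)
    (hx0 : xs 0 = x) (hy0 : ys 0 = y)
    (hys : ∀ n, ys (n + 1) = δ (xs n) ε (ys n))
    (hxs : ∀ n, xs (n + 1) = δ (ys (n + 1)) μ (xs n)) :
    (∀ n, dist (xs (n + 1)) (ys (n + 1)) = ε * μ * dist (xs n) (ys n)) ∧
    (∀ n, dist (xs n) (ys n) = (ε * μ) ^ n * dist x y) ∧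
    Filter.Tendsto (fun n => dist (xs n) (ys n)) Filter.atTop (nhds 0) := by
  have step : ∀ n, dist (xs (n + 1)) (ys (n + 1)) = ε * μ * dist (xs n) (ys n) := by
    intro n
    calc dist (xs (n + 1)) (ys (n + 1))
        = dist (δ (ys (n+1)) μ (xs n)) (δ (ys (n+1)) μ (ys (n+1))) := by
          rw [hxs n, hfix (ys (n+1)) μ hμ]
      _ = μ * dist (xs n) (ys (n+1)) := hcone _ μ hμ _ _
      _ = μ * dist (δ (xs n) ε (xs n)) (δ (xs n) ε (ys n)) := by
          rw [hys n, hfix (xs n) ε hε]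
      _ = ε * μ * dist (xs n) (ys n) := by rw [hcone _ ε hε]; ring
  have geom : ∀ n, dist (xs n) (ys n) = (ε * μ) ^ n * dist x y := by
    intro n
    induction n with
    | zero => simp [hx0, hy0]
    | succ n ih => rw [step n, ih, pow_succ]; ring
  refine ⟨step, geom, ?_⟩
  have h0 : |ε * μ| < 1 := by
    rw [abs_of_pos (mul_pos hε.1 hμ.1)]; exact hεμ
  have := (tendsto_pow_atTop_nhds_zero_of_abs_lt_one h0).mul_const (dist x y)
  simpa [geom] using this
end

section
/- Let (X,d) be a complete metric space with globally defined dilatations δ^x_ε (x ∈ X, ε ∈ (0,1]) satisfying linearity δ^x_ε ∘ δ^y_μ = δ^{δ^x_ε y}_μ ∘ δ^x_ε, the cone property d(δ^x_ε u, δ^x_ε v) = ε·d(u,v), and δ^x_ε x = x. Then for any x, y ∈ X and ε, μ ∈ (0,1) there exists w ∈ X (the unique fixed point of the contraction δ^x_ε ∘ δ^y_μ) such that δ^x_ε ∘ δ^y_μ = δ^w_{εμ}, provided the family ε ↦ δ^z_ε is continuous in (z,ε) in the sense that δ^{z_n}_λ v → δ^z_λ v whenever z_n → z. -/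
open Filter

private def pLam (μ ε : ℝ) : ℕ → ℝ := fun n => if n % 2 = 0 then μ else ε

private def dilSeq {X : Type*} (δ : X → ℝ → X → X) (lam : ℕ → ℝ) (y x : X) : ℕ → X × X
  | 0 => (y, x)
  | n + 1 => ((dilSeq δ lam y x n).2,
      δ (dilSeq δ lam y x n).2 (lam (n + 1)) (dilSeq δ lam y x n).1)

theorem stmt18 {X : Type*} [MetricSpace X] [CompleteSpace X]
    (δ : X → ℝ → X → X)
    (hone : ∀ x u : X, δ x 1 u = u)
    (hfix : ∀ x : X, ∀ ε ∈ Set.Ioc (0 : ℝ) 1, δ x ε x = x)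
    (hsemi : ∀ x : X, ∀ ε ∈ Set.Ioc (0 : ℝ) 1, ∀ μ ∈ Set.Ioc (0 : ℝ) 1,
      ∀ u : X, δ x ε (δ x μ u) = δ x (ε * μ) u)
    (hlin : ∀ (x y : X), ∀ ε ∈ Set.Ioc (0 : ℝ) 1, ∀ μ ∈ Set.Ioc (0 : ℝ) 1,
      ∀ z : X, δ x ε (δ y μ z) = δ (δ x ε y) μ (δ x ε z))
    (hcone : ∀ x : X, ∀ ε ∈ Set.Ioc (0 : ℝ) 1, ∀ u v : X,
      dist (δ x ε u) (δ x ε v) = ε * dist u v)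
    (hcont : ∀ (zs : ℕ → X) (z : X), ∀ l ∈ Set.Ioc (0 : ℝ) 1,
      Filter.Tendsto zs Filter.atTop (nhds z) →
      ∀ v : X, Filter.Tendsto (fun n => δ (zs n) l v) Filter.atTop (nhds (δ z l v)))
    (x y : X) (ε μ : ℝ) (hε : ε ∈ Set.Ioo (0 : ℝ) 1) (hμ : μ ∈ Set.Ioo (0 : ℝ) 1) :
    ∃ w : X, δ x ε (δ y μ w) = w ∧
      ∀ z : X, δ x ε (δ y μ z) = δ w (ε * μ) z := by
  obtain ⟨hε0, hε1⟩ := hε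
  obtain ⟨hμ0, hμ1⟩ := hμ
  have hεm : ε ∈ Set.Ioc (0:ℝ) 1 := ⟨hε0, hε1.le⟩
  have hμm : μ ∈ Set.Ioc (0:ℝ) 1 := ⟨hμ0, hμ1.le⟩
  set lam := pLam μ ε with hlam
  have hlam_mem : ∀ n, lam n ∈ Set.Ioc (0:ℝ) 1 := by
    intro n
    show (if n % 2 = 0 then μ else ε) ∈ Set.Ioc (0:ℝ) 1
    split
    · exact hμm
    · exact hεm
  have hlam_le : ∀ n, lam n ≤ max ε μ := by
    intro n
    show (if n % 2 = 0 then μ else ε) ≤ max ε μ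
    split
    · exact le_max_right _ _
    · exact le_max_left _ _
  have hlam2 : ∀ n, lam (n + 2) = lam n := by
    intro n
    show (if (n + 2) % 2 = 0 then μ else ε) = (if n % 2 = 0 then μ else ε)
    have : (n + 2) % 2 = n % 2 := by omega
    rw [this]
  have hlam_even : ∀ n, lam (2 * n) = μ := by
    intro n
    show (if (2 * n) % 2 = 0 then μ else ε) = μ
    have : (2 * n) % 2 = 0 := by omega
    simp [this]
  have hlam_odd : ∀ n, lam (2 * n + 1) = ε := by
    intro n
    show (if (2 * n + 1) % 2 = 0 then μ else ε) = ε
    have : (2 * n + 1) % 2 = 1 := by omega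
    simp [this]
  set c := dilSeq δ lam y x with hc
  have hc1 : ∀ n, (c (n + 1)).1 = (c n).2 := fun n => rfl
  have hc2 : ∀ n, (c (n + 1)).2 = δ (c n).2 (lam (n + 1)) (c n).1 := fun n => rfl
  -- the invariant: the composition is independent of n
  have hinv : ∀ n (z : X),
      δ (c n).2 (lam (n + 1)) (δ (c n).1 (lam n) z) = δ x ε (δ y μ z) := by
    intro n
    induction n with
    | zero =>
      intro z
      show δ x (lam 1) (δ y (lam 0) z) = δ x ε (δ y μ z)
      rw [show lam 1 = ε from hlam_odd 0, show lam 0 = μ from hlam_even 0]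
    | succ n ih =>
      intro z
      rw [hc1 n, hc2 n, show lam (n + 1 + 1) = lam n from hlam2 n,
        ← hlin ((c n).2) ((c n).1) (lam (n + 1)) (hlam_mem _) (lam n) (hlam_mem _) z]
      exact ih z
  -- geometric convergence of the centers
  have hkey : ∀ n, dist (c (n + 1)).1 (c (n + 2)).1
      = lam (n + 1) * dist (c n).1 (c (n + 1)).1 := by
    intro n
    rw [hc1 n, show (c (n + 2)).1 = δ (c n).2 (lam (n + 1)) (c n).1 from rfl]
    calc dist (c n).2 (δ (c n).2 (lam (n + 1)) (c n).1)
        = dist (δ (c n).2 (lam (n + 1)) (c n).2) (δ (c n).2 (lam (n + 1)) (c n).1) := by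
          rw [hfix _ _ (hlam_mem (n + 1))]
      _ = lam (n + 1) * dist (c n).2 (c n).1 := hcone _ _ (hlam_mem (n + 1)) _ _
      _ = lam (n + 1) * dist (c n).1 (c (n + 1)).1 := by rw [dist_comm, hc1 n]
  have hr0 : (0:ℝ) ≤ max ε μ := le_trans hε0.le (le_max_left _ _)
  have hgeo : ∀ n, dist (c n).1 (c (n + 1)).1 ≤ dist y x * (max ε μ) ^ n := by
    intro n
    induction n with
    | zero =>
      show dist y x ≤ dist y x * (max ε μ) ^ 0
      simp
    | succ n ih =>
      rw [show dist (c (n + 1)).1 (c (n + 1 + 1)).1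
          = lam (n + 1) * dist (c n).1 (c (n + 1)).1 from hkey n]
      calc lam (n + 1) * dist (c n).1 (c (n + 1)).1
          ≤ (max ε μ) * (dist y x * (max ε μ) ^ n) :=
            mul_le_mul (hlam_le _) ih dist_nonneg hr0
        _ = dist y x * (max ε μ) ^ (n + 1) := by ring
  have hcauchy : CauchySeq (fun n => (c n).1) :=
    cauchySeq_of_le_geometric (max ε μ) (dist y x) (max_lt hε1 hμ1) hgeo
  obtain ⟨l, hl⟩ := cauchySeq_tendsto_of_complete hcauchy
  have h2 : Tendsto (fun n : ℕ => (c (2 * n)).1) atTop (nhds l) :=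
    hl.comp (tendsto_atTop_atTop.mpr fun b => ⟨b, fun a ha => by omega⟩)
  have h3 : Tendsto (fun n : ℕ => (c (2 * n + 1)).1) atTop (nhds l) :=
    hl.comp (tendsto_atTop_atTop.mpr fun b => ⟨b, fun a ha => by omega⟩)
  have main : ∀ z : X, δ x ε (δ y μ z) = δ l (ε * μ) z := by
    intro z
    have t1 : Tendsto (fun n => δ ((c (2 * n)).1) μ z) atTop (nhds (δ l μ z)) :=
      hcont _ l μ hμm h2 z
    have t2 : Tendsto (fun n => δ ((c (2 * n + 1)).1) ε (δ l μ z)) atTop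
        (nhds (δ l ε (δ l μ z))) :=
      hcont _ l ε hεm h3 _
    have d1 : Tendsto (fun n => dist (δ ((c (2 * n)).1) μ z) (δ l μ z)) atTop (nhds 0) := by
      simpa using t1.dist (tendsto_const_nhds (x := δ l μ z))
    have d2 : Tendsto (fun n => dist (δ ((c (2 * n + 1)).1) ε (δ l μ z))
        (δ l ε (δ l μ z))) atTop (nhds 0) := by
      simpa using t2.dist (tendsto_const_nhds (x := δ l ε (δ l μ z)))
    have hb : Tendsto (fun n => ε * dist (δ ((c (2 * n)).1) μ z) (δ l μ z)
        + dist (δ ((c (2 * n + 1)).1) ε (δ l μ z)) (δ l ε (δ l μ z))) atTop (nhds 0) := by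
      have := (d1.const_mul ε).add d2
      simpa using this
    have hdist0 : Tendsto (fun n => dist (δ ((c (2 * n + 1)).1) ε (δ ((c (2 * n)).1) μ z))
        (δ l ε (δ l μ z))) atTop (nhds 0) := by
      refine squeeze_zero (fun n => dist_nonneg) (fun n => ?_) hb
      calc dist (δ ((c (2 * n + 1)).1) ε (δ ((c (2 * n)).1) μ z)) (δ l ε (δ l μ z))
          ≤ dist (δ ((c (2 * n + 1)).1) ε (δ ((c (2 * n)).1) μ z))
              (δ ((c (2 * n + 1)).1) ε (δ l μ z))
            + dist (δ ((c (2 * n + 1)).1) ε (δ l μ z)) (δ l ε (δ l μ z)) :=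
            dist_triangle _ _ _
        _ = ε * dist (δ ((c (2 * n)).1) μ z) (δ l μ z)
            + dist (δ ((c (2 * n + 1)).1) ε (δ l μ z)) (δ l ε (δ l μ z)) := by
            rw [hcone _ _ hεm]
    have hconst : ∀ n : ℕ, δ ((c (2 * n + 1)).1) ε (δ ((c (2 * n)).1) μ z)
        = δ x ε (δ y μ z) := by
      intro n
      have h := hinv (2 * n) z
      rw [hlam_even n, show lam (2 * n + 1) = ε from hlam_odd n, ← hc1 (2 * n)] at h
      exact h
    have T : Tendsto (fun _ : ℕ => δ x ε (δ y μ z)) atTop (nhds (δ l ε (δ l μ z))) := by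
      have := tendsto_iff_dist_tendsto_zero.mpr hdist0
      rwa [show (fun n : ℕ => δ ((c (2 * n + 1)).1) ε (δ ((c (2 * n)).1) μ z))
          = fun _ : ℕ => δ x ε (δ y μ z) from funext hconst] at this
    have := tendsto_nhds_unique tendsto_const_nhds T
    rw [this, hsemi l ε hεm μ hμm z]
  refine ⟨l, ?_, main⟩
  rw [main l, hfix l (ε * μ) ⟨mul_pos hε0 hμ0, by nlinarith⟩]
end
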